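/- For every n ≥ 0, the infinite Fibonacci word f has exactly one palindromic factor of length n if n is even, and exactly two palindromic factors of length n if n is odd. In particular, f has a palindromic factor of every length n ≥ 0. -/

import Mathlib

/-!
The Fibonacci word is the mechanical word of slope `α = 2 - φ = 1/φ²`:
`f t = ⌊(t + 2)α⌋ - ⌊(t + 1)α⌋`, because `φ` sends its prefix of length `m` to its prefix of
length `2m - ⌊(m + 1)α⌋`, which comes down to the identity `(1 - α)² = α`.

So a factor of length `n` is the coding `w(x)` of `n` steps of the rotation by `α` from a point
`x` whose orbit avoids the integers, and the reversal of `w(x)` is `w(-x - nα)`. If `w(x)` is a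
palindrome, the orbits of `fract x` and `fract (-x - nα)` have the same floors, hence so does the
orbit of their midpoint: every palindromic factor is `w((k - nα)/2)` with `k ∈ {0, 1}`.
Conversely such a point codes a factor as soon as its orbit avoids the integers, since `ℕα` is
dense modulo `1`. For even `n` the orbit of `-nα/2` passes through `0`; for odd `n` the two
palindromes differ in their middle letter.
-/

/-- The Fibonacci morphism φ: 0 ↦ 01, 1 ↦ 0. -/
def fibPhi (w : List ℕ) : List ℕ := (w.map (fun c => if c = 0 then [0, 1] else [0])).flatten

/-- The infinite Fibonacci word f = 0100101001001⋯, the fixed point of φ starting with 0. -/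
def fibWord (i : ℕ) : ℕ := ((fibPhi^[i + 2]) [0]).getD i 0

/-- A finite word is a factor of the infinite Fibonacci word. -/
def IsFibFactor (x : List ℕ) : Prop :=
  ∃ i : ℕ, x = (List.range x.length).map (fun t => fibWord (i + t))

open Set Filter Topology

noncomputable section

lemma Int.floor_neg_of_notMem {R : Type*} [Ring R] [LinearOrder R] [IsOrderedRing R]
    [FloorRing R] {a : R} (ha : a ∉ Set.range (Int.cast : ℤ → R)) : ⌊-a⌋ = -⌊a⌋ - 1 := by
  rw [Int.floor_neg, (Int.ceil_eq_floor_add_one_iff_notMem a).2 ha]; ring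

lemma Int.eventually_floor_eq {R : Type*} [Ring R] [LinearOrder R] [FloorRing R]
    [TopologicalSpace R] [OrderTopology R] {a : R} (ha : a ∉ Set.range (Int.cast : ℤ → R)) :
    ∀ᶠ b in 𝓝 a, ⌊b⌋ = ⌊a⌋ := by
  have h₀ : (⌊a⌋ : R) < a := (Int.floor_le a).lt_of_ne fun e => ha ⟨_, e⟩
  filter_upwards [Ioo_mem_nhds h₀ (Int.lt_floor_add_one a)] with b hb
  exact Int.floor_eq_iff.2 ⟨hb.1.le, hb.2⟩

section Midpoint

variable {R : Type*} [Field R] [LinearOrder R] [IsStrictOrderedRing R] [FloorRing R] {a b : R}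

lemma Int.floor_midpoint (h : ⌊a⌋ = ⌊b⌋) : ⌊(a + b) / 2⌋ = ⌊a⌋ := by
  have h' : (⌊a⌋ : R) = ⌊b⌋ := by exact_mod_cast h
  rw [Int.floor_eq_iff]
  constructor <;> linarith [Int.floor_le a, Int.floor_le b, Int.lt_floor_add_one a,
    Int.lt_floor_add_one b]

lemma midpoint_notMem_range_intCast (h : ⌊a⌋ = ⌊b⌋)
    (ha : a ∉ Set.range (Int.cast : ℤ → R)) : (a + b) / 2 ∉ Set.range (Int.cast : ℤ → R) := by
  rintro ⟨z, hz⟩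
  have hfl := Int.floor_midpoint h
  rw [← hz, Int.floor_intCast] at hfl
  have ha' : (⌊a⌋ : R) < a := (Int.floor_le a).lt_of_ne fun e => ha ⟨_, e⟩
  have h' : (⌊a⌋ : R) = ⌊b⌋ := by exact_mod_cast h
  linarith [Int.floor_le b, show (z : R) = ⌊a⌋ by exact_mod_cast hfl]

end Midpoint

lemma abs_natCeil_div_mul_sub_lt {R : Type*} [Field R] [LinearOrder R] [IsStrictOrderedRing R]
    [FloorSemiring R] {δ z : R} (hδ : δ ≠ 0) (hz : 0 ≤ z / δ) : |⌈z / δ⌉₊ * δ - z| < |δ| := by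
  have h₁ := Nat.le_ceil (z / δ)
  have h₂ := Nat.ceil_lt_add_one hz
  calc |⌈z / δ⌉₊ * δ - z| = |⌈z / δ⌉₊ - z / δ| * |δ| := by
        rw [← abs_mul, sub_mul, div_mul_cancel₀ z hδ]
    _ < 1 * |δ| :=
        mul_lt_mul_of_pos_right (abs_lt.2 ⟨by linarith, by linarith⟩) (abs_pos.2 hδ)
    _ = |δ| := one_mul _

lemma exists_abs_nat_mul_add_intCast_sub_lt_abs {δ : ℝ} (hδ : δ ≠ 0) (y : ℝ) :
    ∃ (m : ℕ) (c : ℤ), |m * δ + c - y| < |δ| := by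
  have hy := Int.self_sub_floor y
  rcases hδ.lt_or_gt with hneg | hpos
  · refine ⟨⌈(Int.fract y - 1) / δ⌉₊, ⌊y⌋ + 1, ?_⟩
    rw [show ∀ m : ℝ, m + ((⌊y⌋ + 1 : ℤ) : ℝ) - y = m - (Int.fract y - 1) by
      intro m; push_cast; linarith]
    exact abs_natCeil_div_mul_sub_lt hδ
      (div_nonneg_of_nonpos (by linarith [Int.fract_lt_one y]) hneg.le)
  · refine ⟨⌈Int.fract y / δ⌉₊, ⌊y⌋, ?_⟩
    rw [show ∀ m : ℝ, m + (⌊y⌋ : ℝ) - y = m - Int.fract y by intro m; linarith]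
    exact abs_natCeil_div_mul_sub_lt hδ (div_nonneg (Int.fract_nonneg y) hpos.le)

lemma Irrational.exists_abs_nat_mul_add_intCast_sub_lt {α : ℝ} (hα : Irrational α) (x : ℝ)
    {ε : ℝ} (hε : 0 < ε) : ∃ (j : ℕ) (c : ℤ), |j * α + c - x| < ε := by
  obtain ⟨N, hN⟩ := exists_nat_one_div_lt hε
  obtain ⟨p, k, hk, -, hδ⟩ := Real.exists_int_int_abs_mul_sub_le α N.succ_pos
  have hδ0 : k * α - p ≠ 0 := sub_ne_zero.2 ((hα.intCast_mul hk.ne').ne_int p)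
  obtain ⟨m, c, hm⟩ := exists_abs_nat_mul_add_intCast_sub_lt_abs hδ0 x
  lift k to ℕ using hk.le
  push_cast at hδ hm
  refine ⟨m * k, c - m * p, ?_⟩
  calc |((m * k : ℕ) : ℝ) * α + ((c - m * p : ℤ) : ℝ) - x|
        = |m * (k * α - p) + c - x| := by push_cast; ring_nf
    _ < |k * α - p| := hm
    _ ≤ 1 / (N + 1 + 1) := hδ
    _ ≤ 1 / (N + 1) := by gcongr; linarith
    _ < ε := hN

namespace Sturmian

variable {α x y : ℝ} {n : ℕ}

/-- The lower mechanical word of slope `α` and intercept `x`. -/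
def mechSeq (α x : ℝ) (t : ℕ) : ℕ := (⌊x + (t + 1) * α⌋ - ⌊x + t * α⌋).toNat

def mechWord (α x : ℝ) (n : ℕ) : List ℕ := (List.range n).map (mechSeq α x)

def OrbitAvoidsInt (α x : ℝ) (n : ℕ) : Prop :=
  ∀ s ≤ n, x + s * α ∉ Set.range (Int.cast : ℤ → ℝ)

@[simp] lemma length_mechWord : (mechWord α x n).length = n := by simp [mechWord]

lemma mechWord_succ : mechWord α x (n + 1) = mechWord α x n ++ [mechSeq α x n] := by
  simp [mechWord, List.range_succ]

lemma mechSeq_add (i t : ℕ) : mechSeq α x (i + t) = mechSeq α (x + i * α) t := by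
  simp only [mechSeq]; push_cast; ring_nf

lemma natCast_mechSeq (hα : 0 ≤ α) (t : ℕ) :
    (mechSeq α x t : ℤ) = ⌊x + (t + 1) * α⌋ - ⌊x + t * α⌋ :=
  Int.toNat_of_nonneg <| sub_nonneg.2 <| Int.floor_mono <| by nlinarith

lemma mechSeq_le_one (hα : α < 1) (t : ℕ) : mechSeq α x t ≤ 1 := by
  have : ⌊x + (t + 1) * α⌋ ≤ ⌊x + t * α⌋ + 1 := by
    rw [← Int.floor_add_one]; exact Int.floor_mono (by nlinarith)
  unfold mechSeq; omega

lemma mechWord_add_intCast (k : ℤ) : mechWord α (x + k) n = mechWord α x n := by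
  simp only [mechWord]; congr 1; funext t
  simp only [mechSeq, add_right_comm x (k : ℝ), Int.floor_add_intCast, add_sub_add_right_eq_sub]

lemma mechWord_fract : mechWord α (Int.fract x) n = mechWord α x n := by
  rw [Int.fract, sub_eq_add_neg, ← Int.cast_neg, mechWord_add_intCast]

lemma mechWord_eq_iff (hα : 0 ≤ α) : mechWord α x n = mechWord α y n ↔
    ∀ s ≤ n, ⌊x + s * α⌋ - ⌊x⌋ = ⌊y + s * α⌋ - ⌊y⌋ := by
  simp only [mechWord, List.map_inj_left, List.mem_range]
  constructor
  · intro h s hs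
    induction s with
    | zero => simp
    | succ s ih =>
      have := congrArg (Nat.cast : ℕ → ℤ) (h s (by omega))
      rw [natCast_mechSeq hα, natCast_mechSeq hα] at this
      push_cast
      linarith [ih (by omega)]
  · intro h t ht
    apply Nat.cast_injective (R := ℤ)
    simp only [natCast_mechSeq hα]
    have h1 := h (t + 1) ht
    have h0 := h t ht.le
    push_cast at h1
    linarith

lemma reverse_mechWord (hx : OrbitAvoidsInt α x n) :
    (mechWord α x n).reverse = mechWord α (-x - n * α) n := by
  refine List.ext_getElem (by simp) fun t h₁ h₂ => ?_
  simp only [length_mechWord] at h₂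
  simp only [List.getElem_reverse, mechWord, List.getElem_map, List.getElem_range,
    List.length_map, List.length_range]
  obtain ⟨u, rfl⟩ : ∃ u, n = u + t + 1 := ⟨n - t - 1, by omega⟩
  have e₁ : -x - ↑(u + t + 1) * α + (t + 1) * α = -(x + u * α) := by push_cast; ring
  have e₂ : -x - ↑(u + t + 1) * α + t * α = -(x + ↑(u + 1) * α) := by push_cast; ring
  rw [show u + t + 1 - 1 - t = u by omega]
  unfold mechSeq
  rw [e₁, e₂, Int.floor_neg_of_notMem (hx u (by omega)),
    Int.floor_neg_of_notMem (hx (u + 1) (by omega))]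
  push_cast; ring_nf

lemma OrbitAvoidsInt.fract (hx : OrbitAvoidsInt α x n) : OrbitAvoidsInt α (Int.fract x) n := by
  rintro s hs ⟨z, hz⟩
  exact hx s hs ⟨z + ⌊x⌋, by rw [Int.fract] at hz; push_cast; linarith⟩

lemma orbitAvoidsInt_add_natCast_mul (hα : Irrational α) (i : ℕ) :
    OrbitAvoidsInt α (α + i * α) n := by
  rintro s - ⟨z, hz⟩
  refine (hα.natCast_mul (Nat.succ_ne_zero (i + s))).ne_int z ?_
  push_cast; linarith

/-- The solutions of `2x ≡ -nα (mod 1)`: as `x` and `-x - nα` code mutually reversed words,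
palindromes of length `n` are coded at these points. -/
def centerPoint (α : ℝ) (n : ℕ) (k : ℤ) : ℝ := (k - n * α) / 2

lemma exists_centerPoint_of_reverse_eq (hα : 0 ≤ α) (hx : OrbitAvoidsInt α x n)
    (hpal : (mechWord α x n).reverse = mechWord α x n) :
    ∃ k : ℤ, OrbitAvoidsInt α (centerPoint α n k) n ∧
      mechWord α (centerPoint α n k) n = mechWord α x n := by
  set y := -x - n * α
  have hx' : mechWord α (Int.fract x) n = mechWord α x n := mechWord_fract
  have hy' : mechWord α (Int.fract y) n = mechWord α y n := mechWord_fract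
  have hfloor : ∀ s ≤ n, ⌊Int.fract x + s * α⌋ = ⌊Int.fract y + s * α⌋ := by
    have hw : mechWord α (Int.fract x) n = mechWord α (Int.fract y) n := by
      rw [hx', hy', ← hpal, reverse_mechWord hx]
    simpa only [Int.floor_fract, sub_zero] using (mechWord_eq_iff hα).1 hw
  have hcenter : centerPoint α n (-(⌊x⌋ + ⌊y⌋)) = (Int.fract x + Int.fract y) / 2 := by
    simp only [centerPoint, Int.fract, y]; push_cast; ring
  have hmid : ∀ s ≤ n, ⌊centerPoint α n (-(⌊x⌋ + ⌊y⌋)) + s * α⌋ = ⌊Int.fract x + s * α⌋ := by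
    intro s hs
    rw [hcenter, ← Int.floor_midpoint (hfloor s hs)]
    ring_nf
  refine ⟨-(⌊x⌋ + ⌊y⌋), fun s hs => ?_, ?_⟩
  · rw [hcenter, show (Int.fract x + Int.fract y) / 2 + s * α =
      (Int.fract x + s * α + (Int.fract y + s * α)) / 2 by ring]
    exact midpoint_notMem_range_intCast (hfloor s hs) (hx.fract s hs)
  · rw [← hx', mechWord_eq_iff hα]
    intro s hs
    have h0 := hmid 0 (Nat.zero_le n)
    simp only [Nat.cast_zero, zero_mul, add_zero] at h0
    rw [hmid s hs, h0]

lemma eventually_mechWord_eq (hα : 0 ≤ α) (hx : OrbitAvoidsInt α x n) :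
    ∀ᶠ y in 𝓝 x, mechWord α y n = mechWord α x n := by
  have : ∀ s ∈ Iic n, ∀ᶠ y in 𝓝 x, ⌊y + s * α⌋ = ⌊x + s * α⌋ := fun s hs =>
    ((continuous_add_const _).tendsto x).eventually (Int.eventually_floor_eq (hx s hs))
  filter_upwards [(finite_Iic n).eventually_all.2 this] with y hy
  rw [mechWord_eq_iff hα]
  intro s hs
  have h0 := hy 0 (Nat.zero_le n)
  simp only [Nat.cast_zero, zero_mul, add_zero] at h0
  rw [hy s hs, h0]

lemma exists_mechWord_add_natCast_mul_eq (hα : Irrational α) (hα0 : 0 ≤ α)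
    (hx : OrbitAvoidsInt α x n) :
    ∃ i : ℕ, mechWord α (α + i * α) n = mechWord α x n := by
  obtain ⟨ε, hε, hball⟩ := Metric.eventually_nhds_iff.1 (eventually_mechWord_eq hα0 hx)
  obtain ⟨j, c, hj⟩ := hα.exists_abs_nat_mul_add_intCast_sub_lt (x - α) hε
  refine ⟨j, ?_⟩
  rw [← mechWord_add_intCast c]
  exact hball (by rw [Real.dist_eq]; convert hj using 2; ring)

lemma orbitAvoidsInt_centerPoint_iff (hα : Irrational α) {k : ℤ} :
    OrbitAvoidsInt α (centerPoint α n k) n ↔ Odd n ∨ Odd k := by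
  constructor
  · intro h
    by_contra! hev
    obtain ⟨⟨p, rfl⟩, ⟨q, rfl⟩⟩ := And.imp Nat.not_odd_iff_even.1 Int.not_odd_iff_even.1 hev
    exact h p (by omega) ⟨q, by simp only [centerPoint]; push_cast; ring⟩
  · rintro hodd s - ⟨z, hz⟩
    have hlin : ((2 * s - n : ℤ) : ℝ) * α = ((2 * z - k : ℤ) : ℝ) := by
      simp only [centerPoint] at hz; push_cast; linarith
    by_cases hs : 2 * (s : ℤ) - n = 0
    · have hk : k = 2 * z := by
        rw [hs, Int.cast_zero, zero_mul, eq_comm, Int.cast_eq_zero] at hlin; omega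
      rcases hodd with hn | hk'
      · exact Nat.not_even_iff_odd.2 hn ⟨s, by omega⟩
      · exact Int.not_even_iff_odd.2 hk' ⟨z, by omega⟩
    · exact (hα.intCast_mul hs).ne_int _ hlin

lemma mechWord_centerPoint_emod_two (k : ℤ) :
    mechWord α (centerPoint α n (k % 2)) n = mechWord α (centerPoint α n k) n := by
  rw [← mechWord_add_intCast (k / 2)]
  congr 1
  simp only [centerPoint]
  have hk : (k : ℝ) = ((k % 2 : ℤ) : ℝ) + 2 * ((k / 2 : ℤ) : ℝ) := by
    exact_mod_cast (Int.emod_add_mul_ediv k 2).symm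
  rw [hk]; ring

lemma reverse_mechWord_centerPoint {k : ℤ} (h : OrbitAvoidsInt α (centerPoint α n k) n) :
    (mechWord α (centerPoint α n k) n).reverse = mechWord α (centerPoint α n k) n := by
  rw [reverse_mechWord h, ← mechWord_add_intCast (α := α) (x := -_ - _) (n := n) k]
  congr 1
  simp only [centerPoint]; ring

lemma mechWord_centerPoint_zero_ne_one (h0 : 0 < α) (h1 : α < 1) (hn : Odd n) :
    mechWord α (centerPoint α n 0) n ≠ mechWord α (centerPoint α n 1) n := by
  obtain ⟨p, rfl⟩ := hn
  intro h
  have hp := (mechWord_eq_iff h0.le).1 h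
  have key := congrArg₂ (· - ·) (hp (p + 1) (by omega)) (hp p (by omega))
  have e₀ : centerPoint α (2 * p + 1) 0 + ↑(p + 1) * α = α / 2 := by
    simp only [centerPoint]; push_cast; ring
  have e₀' : centerPoint α (2 * p + 1) 0 + p * α = -(α / 2) := by
    simp only [centerPoint]; push_cast; ring
  have e₁ : centerPoint α (2 * p + 1) 1 + ↑(p + 1) * α = 1 / 2 + α / 2 := by
    simp only [centerPoint]; push_cast; ring
  have e₁' : centerPoint α (2 * p + 1) 1 + p * α = 1 / 2 - α / 2 := by
    simp only [centerPoint]; push_cast; ring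
  have f₀ : ⌊α / 2⌋ = 0 := Int.floor_eq_zero_iff.2 ⟨by linarith, by linarith⟩
  have f₀' : ⌊-(α / 2)⌋ = -1 :=
    Int.floor_eq_iff.2 ⟨by push_cast; linarith, by push_cast; linarith⟩
  have f₁ : ⌊1 / 2 + α / 2⌋ = 0 := Int.floor_eq_zero_iff.2 ⟨by linarith, by linarith⟩
  have f₁' : ⌊1 / 2 - α / 2⌋ = 0 := Int.floor_eq_zero_iff.2 ⟨by linarith, by linarith⟩
  simp only [e₀, e₀', e₁, e₁', f₀, f₀', f₁, f₁'] at key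
  omega

lemma palindromic_factor_iff (hα : Irrational α) (hα0 : 0 ≤ α) {w : List ℕ} :
    ((∃ i : ℕ, w = mechWord α (α + i * α) n) ∧ w.reverse = w) ↔
      ∃ k : ℤ, (Odd n ∨ Odd k) ∧ w = mechWord α (centerPoint α n k) n := by
  constructor
  · rintro ⟨⟨i, rfl⟩, hpal⟩
    obtain ⟨k, hk, heq⟩ :=
      exists_centerPoint_of_reverse_eq hα0 (orbitAvoidsInt_add_natCast_mul hα i) hpal
    exact ⟨k, (orbitAvoidsInt_centerPoint_iff hα).1 hk, heq.symm⟩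
  · rintro ⟨k, hk, rfl⟩
    have hk' := (orbitAvoidsInt_centerPoint_iff hα).2 hk
    obtain ⟨i, hi⟩ := exists_mechWord_add_natCast_mul_eq hα hα0 hk'
    exact ⟨⟨i, hi.symm⟩, reverse_mechWord_centerPoint hk'⟩

theorem ncard_palindromic_factors (hα : Irrational α) (h0 : 0 < α) (h1 : α < 1) (n : ℕ) :
    {w : List ℕ | (∃ i : ℕ, w = mechWord α (α + i * α) n) ∧ w.reverse = w}.ncard =
      if Even n then 1 else 2 := by
  simp_rw [palindromic_factor_iff hα h0.le]
  split_ifs with hn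
  · convert Set.ncard_singleton (mechWord α (centerPoint α n 1) n)
    ext w
    simp only [Set.mem_ofPred_eq, Set.mem_singleton_iff, Nat.not_odd_iff_even.2 hn, false_or]
    constructor
    · rintro ⟨k, hk, rfl⟩
      rw [← mechWord_centerPoint_emod_two, Int.odd_iff.1 hk]
    · rintro rfl
      exact ⟨1, odd_one, rfl⟩
  · rw [Nat.not_even_iff_odd] at hn
    convert Set.ncard_pair (mechWord_centerPoint_zero_ne_one h0 h1 hn)
    ext w
    simp only [Set.mem_ofPred_eq, Set.mem_insert_iff, Set.mem_singleton_iff, hn, true_or,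
      true_and]
    constructor
    · rintro ⟨k, rfl⟩
      rw [← mechWord_centerPoint_emod_two]
      rcases Int.emod_two_eq_zero_or_one k with h | h <;> simp [h]
    · rintro (rfl | rfl)
      exacts [⟨0, rfl⟩, ⟨1, rfl⟩]

end Sturmian

end

open Sturmian Real

/-- `1/φ²`, the frequency of the letter `1` in the Fibonacci word. -/
noncomputable def fibSlope : ℝ := 2 - goldenRatio

lemma fibSlope_irrational : Irrational fibSlope := by
  simpa [fibSlope] using goldenRatio_irrational.intCast_sub 2

lemma one_sub_fibSlope_sq : (1 - fibSlope) ^ 2 = fibSlope := by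
  simp only [fibSlope]; linear_combination goldenRatio_sq

lemma fibSlope_pos : 0 < fibSlope := by simp only [fibSlope]; linarith [goldenRatio_lt_two]

lemma fibSlope_lt_half : fibSlope < 1 / 2 := by
  simp only [fibSlope]; nlinarith [goldenRatio_sq, one_lt_goldenRatio]

lemma fibSlope_lt_one : fibSlope < 1 := fibSlope_lt_half.trans (by norm_num)

lemma floor_fibSlope : ⌊fibSlope⌋ = 0 :=
  Int.floor_eq_zero_iff.2 ⟨fibSlope_pos.le, fibSlope_lt_one⟩

lemma fibPhi_append (u v : List ℕ) : fibPhi (u ++ v) = fibPhi u ++ fibPhi v := by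
  simp [fibPhi]

local notation "α" => fibSlope

lemma fract_fibSlope_add_mul_pos (m : ℕ) : 0 < Int.fract (α + m * α) := by
  rw [Int.fract_pos, show α + m * α = ((m + 1 : ℕ) : ℝ) * α by push_cast; ring]
  exact (fibSlope_irrational.natCast_mul m.succ_ne_zero).ne_int _

lemma floor_fibSlope_add_mul_eq {m p : ℕ} (hp : (p : ℤ) + ⌊α + m * α⌋ = 2 * m) (j : ℕ) :
    ⌊α + (p + j) * α⌋ =
      m - ⌊α + m * α⌋ + ⌊(1 - Int.fract (α + m * α)) * (1 - α) + j * α⌋ := by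
  have hpR : (p : ℝ) = 2 * m - ⌊α + m * α⌋ := by
    rw [eq_sub_iff_add_eq]; exact_mod_cast hp
  have key : α + (p + j) * α =
      ((m - ⌊α + m * α⌋ : ℤ) : ℝ) + ((1 - Int.fract (α + m * α)) * (1 - α) + j * α) := by
    rw [hpR, Int.fract]; push_cast
    linear_combination (-(m + 1 : ℝ)) * one_sub_fibSlope_sq
  rw [key, Int.floor_intCast_add]

lemma mechSeq_fibSlope_eq_zero {m p : ℕ} (hp : (p : ℤ) + ⌊α + m * α⌋ = 2 * m) :
    mechSeq α α p = 0 := by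
  have h₀ := floor_fibSlope_add_mul_eq hp 0
  have h₁ := floor_fibSlope_add_mul_eq hp 1
  set θ := Int.fract (α + m * α)
  have hθ : 0 < θ := fract_fibSlope_add_mul_pos m
  have hθ' : θ < 1 := Int.fract_lt_one _
  have hα := fibSlope_pos
  have hα' := fibSlope_lt_half
  have f₀ : ⌊(1 - θ) * (1 - α)⌋ = 0 := Int.floor_eq_zero_iff.2 ⟨by nlinarith, by nlinarith⟩
  have f₁ : ⌊(1 - θ) * (1 - α) + α⌋ = 0 := Int.floor_eq_zero_iff.2 ⟨by nlinarith, by nlinarith⟩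
  simp only [Nat.cast_zero, Nat.cast_one, add_zero, zero_mul, one_mul, f₀, f₁] at h₀ h₁
  simp [mechSeq, h₀, h₁]

lemma mechSeq_fibSlope_succ_eq_one {m p : ℕ} (hp : (p : ℤ) + ⌊α + m * α⌋ = 2 * m)
    (hm : mechSeq α α m = 0) : mechSeq α α (p + 1) = 1 := by
  have h₁ := floor_fibSlope_add_mul_eq hp 1
  have h₂ := floor_fibSlope_add_mul_eq hp 2
  have hstep := natCast_mechSeq (x := α) fibSlope_pos.le m
  set θ := Int.fract (α + m * α) with hθdef
  have hθ : 0 < θ := fract_fibSlope_add_mul_pos m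
  have hα := fibSlope_pos
  have hθα : θ + α < 1 := by
    rw [hm, Nat.cast_zero, eq_comm, sub_eq_zero, add_one_mul, ← add_assoc,
      Int.floor_eq_iff] at hstep
    rw [hθdef, Int.fract]; linarith [hstep.2]
  have f₁ : ⌊(1 - θ) * (1 - α) + α⌋ = 0 := Int.floor_eq_zero_iff.2 ⟨by nlinarith, by nlinarith⟩
  have f₂ : ⌊(1 - θ) * (1 - α) + 2 * α⌋ = 1 :=
    Int.floor_eq_iff.2 ⟨by push_cast; nlinarith [one_sub_fibSlope_sq], by push_cast; nlinarith⟩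
  simp only [Nat.cast_one, Nat.cast_ofNat, one_mul, f₁, f₂] at h₁ h₂
  simp only [mechSeq, Nat.cast_add, Nat.cast_one, add_assoc, one_add_one_eq_two, h₁, h₂]
  simp

lemma exists_fibPhi_mechWord_fibSlope_eq (m : ℕ) :
    ∃ p : ℕ, (p : ℤ) + ⌊α + m * α⌋ = 2 * m ∧ fibPhi (mechWord α α m) = mechWord α α p := by
  induction m with
  | zero =>
    exact ⟨0, by simp [floor_fibSlope], rfl⟩
  | succ m ih =>
    obtain ⟨p, hp, hφ⟩ := ih
    have hcast := natCast_mechSeq (x := α) fibSlope_pos.le m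
    rw [mechWord_succ, fibPhi_append, hφ]
    by_cases ha : mechSeq α α m = 0
    · refine ⟨p + 2, ?_, ?_⟩
      · push_cast; rw [ha] at hcast; push_cast at hcast; linarith
      · rw [mechWord_succ, mechWord_succ, mechSeq_fibSlope_eq_zero hp,
          mechSeq_fibSlope_succ_eq_one hp ha, ha]
        simp [fibPhi]
    · have ha1 : mechSeq α α m = 1 := by
        have := mechSeq_le_one (x := α) fibSlope_lt_one m; omega
      refine ⟨p + 1, ?_, ?_⟩
      · push_cast; rw [ha1] at hcast; push_cast at hcast; linarith
      · rw [mechWord_succ, mechSeq_fibSlope_eq_zero hp, ha1]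
        simp [fibPhi]

lemma exists_iterate_fibPhi_eq_mechWord (k : ℕ) :
    ∃ p, k < p ∧ fibPhi^[k] [0] = mechWord α α p := by
  induction k with
  | zero =>
    refine ⟨1, one_pos, ?_⟩
    rw [Function.iterate_zero_apply, ← zero_add 1, mechWord_succ,
      mechSeq_fibSlope_eq_zero (m := 0) (p := 0) ?_]
    · rfl
    · simp [floor_fibSlope]
  | succ k ih =>
    obtain ⟨p, hkp, hp⟩ := ih
    obtain ⟨q, hq, hφ⟩ := exists_fibPhi_mechWord_fibSlope_eq p
    refine ⟨q, ?_, by rw [Function.iterate_succ_apply', hp, hφ]⟩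
    have : ⌊α + p * α⌋ < p := by
      rw [Int.floor_lt]
      have : (1 : ℝ) ≤ p := by exact_mod_cast (show 1 ≤ p by omega)
      push_cast; nlinarith [fibSlope_lt_half]
    omega

lemma fibWord_eq_mechSeq (i : ℕ) : fibWord i = mechSeq α α i := by
  obtain ⟨p, hp, h⟩ := exists_iterate_fibPhi_eq_mechWord (i + 2)
  rw [fibWord, h, List.getD_eq_getElem _ _ (by simp; omega)]
  simp [mechWord]

lemma isFibFactor_and_length_eq_iff {x : List ℕ} {n : ℕ} :
    (IsFibFactor x ∧ x.length = n) ↔ ∃ i : ℕ, x = mechWord α (α + i * α) n := by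
  have hwin : ∀ i, (List.range n).map (fun t => fibWord (i + t)) = mechWord α (α + i * α) n :=
    fun i => by simp only [fibWord_eq_mechSeq, mechSeq_add, mechWord]
  constructor
  · rintro ⟨⟨i, hi⟩, rfl⟩
    exact ⟨i, hi.trans (hwin i)⟩
  · rintro ⟨i, rfl⟩
    exact ⟨⟨i, by rw [length_mechWord, hwin]⟩, length_mechWord⟩

/-- The Fibonacci word has exactly one palindromic factor of each even length
and exactly two palindromic factors of each odd length. -/
theorem fibWord_palindrome_count :
    ∀ n : ℕ, {x : List ℕ | IsFibFactor x ∧ x.length = n ∧ x.reverse = x}.ncard =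
      if Even n then 1 else 2 := by
  intro n
  have hset : {x : List ℕ | IsFibFactor x ∧ x.length = n ∧ x.reverse = x} =
      {w | (∃ i : ℕ, w = mechWord α (α + i * α) n) ∧ w.reverse = w} := by
    ext x
    simp only [Set.mem_ofPred_eq, ← and_assoc, isFibFactor_and_length_eq_iff]
  rw [hset]
  exact ncard_palindromic_factors fibSlope_irrational fibSlope_pos fibSlope_lt_one n
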